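/- Let $p$ be prime, $g$ coprime to $p$ of order $T$, $a$ coprime to $p$, and suppose $E_p(K) \ll K^{5/2}$ for $1 \le K \le T$. Let $N \le T$ be a positive integer and let $(\varphi_x)$ satisfy $|\varphi_x| \ll e^{-i} N$ for $x \in \mathcal{L}_i$, where $\mathcal{L}_i \subseteq \{1,\ldots,T\}$ is an interval with $|\mathcal{L}_i| \le e^i T/N$. Then $\sum_{m=0}^{p-1} \Big| \sum_{x\in\mathcal{L}_i} \varphi_x e_p(amg^x)\Big|^4 \ll p\, e^{-3i/2} N^{3/2} T^{5/2}$. -/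

import Mathlib

open Finset

def addEnergy (p : ℕ) (g : ℤ) (K : ℕ) : ℕ :=
  ((Finset.Icc 1 K ×ˢ Finset.Icc 1 K ×ˢ Finset.Icc 1 K ×ˢ Finset.Icc 1 K).filter
    (fun q => (g : ZMod p) ^ q.1 + (g : ZMod p) ^ q.2.1
      = (g : ZMod p) ^ q.2.2.1 + (g : ZMod p) ^ q.2.2.2)).card

noncomputable def ep (p : ℕ) (z : ℤ) : ℂ := Complex.exp (2 * Real.pi * Complex.I * z / p)

lemma ep_add (p : ℕ) (x y : ℤ) : ep p (x + y) = ep p x * ep p y := by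
  rw [ep, ep, ep, ← Complex.exp_add]
  congr 1
  push_cast
  ring

lemma ep_conj (p : ℕ) (z : ℤ) : (starRingEnd ℂ) (ep p z) = ep p (-z) := by
  rw [ep, ep, ← Complex.exp_conj]
  congr 1
  simp only [map_div₀, map_mul, Complex.conj_I, Complex.conj_ofReal, map_ofNat, map_natCast,
    map_intCast]
  push_cast
  ring

lemma ep_pow (p : ℕ) (c : ℤ) (m : ℕ) : ep p (c * m) = (ep p c) ^ m := by
  rw [ep, ep, ← Complex.exp_nat_mul]
  congr 1
  push_cast
  ring

lemma ep_sum_eq (p : ℕ) (hp : p.Prime) (c : ℤ) :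
    ∑ m ∈ Finset.range p, ep p (c * m) = if (c : ZMod p) = 0 then (p : ℂ) else 0 := by
  have hp0 : (p : ℂ) ≠ 0 := Nat.cast_ne_zero.mpr hp.pos.ne'
  simp_rw [ep_pow]
  by_cases h : (c : ZMod p) = 0
  · rw [if_pos h]
    obtain ⟨k, hk⟩ := (ZMod.intCast_zmod_eq_zero_iff_dvd c p).mp h
    have h1 : ep p c = 1 := by
      rw [ep, hk]
      rw [show (2 * Real.pi * Complex.I * (((p : ℤ) * k : ℤ) : ℂ) / p : ℂ)
          = (k : ℤ) * (2 * Real.pi * Complex.I) from by field_simp; push_cast; ring]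
      exact Complex.exp_int_mul_two_pi_mul_I k
    simp [h1]
  · rw [if_neg h]
    have hne : ep p c ≠ 1 := by
      intro h1
      rw [ep, Complex.exp_eq_one_iff] at h1
      obtain ⟨n, hn⟩ := h1
      apply h
      rw [ZMod.intCast_zmod_eq_zero_iff_dvd]
      refine ⟨n, ?_⟩
      have h2 : (c : ℂ) = ((p : ℤ) * n : ℤ) := by
        have h2pi : (2 * (Real.pi : ℂ) * Complex.I : ℂ) ≠ 0 := by
          simp [Real.pi_ne_zero, Complex.I_ne_zero]
        rw [div_eq_iff hp0] at hn
        apply mul_left_cancel₀ h2pi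
        push_cast
        linear_combination hn
      exact_mod_cast h2
    have hpow : ep p c ^ p = 1 := by
      rw [← ep_pow, ep]
      rw [show (2 * Real.pi * Complex.I * ((c * (p : ℕ) : ℤ) : ℂ) / p : ℂ)
          = c * (2 * Real.pi * Complex.I) from by field_simp; push_cast; ring]
      exact Complex.exp_int_mul_two_pi_mul_I c
    rw [geom_sum_eq hne, hpow]
    simp

lemma arith_aux (x n t : ℝ) (hn : 0 < n) (ht : 0 ≤ t) :
    (Real.exp (-x) * n) ^ 4 * (Real.exp x * t / n) ^ ((5 : ℝ) / 2)
      = Real.exp (-(3 : ℝ) * x / 2) * n ^ ((3 : ℝ) / 2) * t ^ ((5 : ℝ) / 2) := by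
  rcases ht.eq_or_lt with rfl | ht'
  · simp [Real.zero_rpow (by norm_num : ((5 : ℝ) / 2) ≠ 0)]
  · have hLpos : 0 < (Real.exp (-x) * n) ^ 4 * (Real.exp x * t / n) ^ ((5 : ℝ) / 2) := by
      positivity
    have hRpos : 0 < Real.exp (-(3 : ℝ) * x / 2) * n ^ ((3 : ℝ) / 2) * t ^ ((5 : ℝ) / 2) := by
      positivity
    apply Real.log_injOn_pos (Set.mem_Ioi.mpr hLpos) (Set.mem_Ioi.mpr hRpos)
    rw [Real.log_mul (by positivity) (by positivity), Real.log_pow,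
      Real.log_mul (by positivity) hn.ne', Real.log_exp,
      Real.log_rpow (by positivity), Real.log_div (by positivity) hn.ne',
      Real.log_mul (by positivity) ht'.ne', Real.log_exp,
      Real.log_mul (by positivity) (by positivity),
      Real.log_mul (by positivity) (by positivity), Real.log_exp,
      Real.log_rpow hn, Real.log_rpow ht']
    ring

theorem stmt15 (C D : ℝ) :
    ∃ C' : ℝ, 0 < C' ∧
      ∀ (p T N i : ℕ) (g a : ℤ) (L : Finset ℕ) (φ : ℕ → ℂ),
        p.Prime → Int.gcd g p = 1 → Int.gcd a p = 1 →
        T = orderOf ((g : ZMod p)) →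
        (∀ K : ℕ, 1 ≤ K → K ≤ T → (addEnergy p g K : ℝ) ≤ C * (K : ℝ) ^ ((5 : ℝ) / 2)) →
        1 ≤ N → N ≤ T →
        L ⊆ Finset.Icc 1 T →
        (∃ s : ℕ, L = Finset.Icc (s + 1) (s + L.card)) →
        (L.card : ℝ) ≤ Real.exp (i : ℝ) * T / N →
        (∀ x ∈ L, ‖φ x‖ ≤ D * Real.exp (-(i : ℝ)) * N) →
        ∑ m ∈ Finset.range p, ‖∑ x ∈ L, φ x * ep p (a * m * g ^ x)‖ ^ 4 ≤
          C' * p * Real.exp (-(3 : ℝ) * i / 2) * (N : ℝ) ^ ((3 : ℝ) / 2) * (T : ℝ) ^ ((5 : ℝ) / 2) := by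
  refine ⟨max (C * D ^ 4) 0 + 1, by
    have := le_max_right (C * D ^ 4) (0 : ℝ); linarith, ?_⟩
  intro p T N i g a L φ hp hg ha hT hE hN1 hNT hLsub hLint hLcard hφ
  haveI : Fact p.Prime := ⟨hp⟩
  have hC'def : (0 : ℝ) ≤ max (C * D ^ 4) 0 := le_max_right _ _
  have hRHS0 : 0 ≤ (max (C * D ^ 4) 0 + 1) * p * Real.exp (-(3 : ℝ) * i / 2) *
      (N : ℝ) ^ ((3 : ℝ) / 2) * (T : ℝ) ^ ((5 : ℝ) / 2) := by positivity
  rcases L.eq_empty_or_nonempty with hLe | hLne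
  · subst hLe
    simpa using hRHS0
  -- setup
  obtain ⟨s, hLeq⟩ := hLint
  set K := L.card with hK
  have hK1 : 1 ≤ K := Finset.card_pos.mpr hLne
  have hKT : K ≤ T := by
    have h := Finset.card_le_card hLsub
    simpa using h
  have h1T : 1 ≤ T := le_trans hN1 hNT
  have hgp : ¬ (p : ℤ) ∣ g := by
    intro hdvd
    have h1 : (p : ℤ) ∣ (Int.gcd g p : ℤ) := by exact_mod_cast Int.dvd_gcd hdvd dvd_rfl
    rw [hg] at h1
    have h2 := Int.le_of_dvd one_pos h1
    have h3 := hp.two_le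
    omega
  have hap : ¬ (p : ℤ) ∣ a := by
    intro hdvd
    have h1 : (p : ℤ) ∣ (Int.gcd a p : ℤ) := by exact_mod_cast Int.dvd_gcd hdvd dvd_rfl
    rw [ha] at h1
    have h2 := Int.le_of_dvd one_pos h1
    have h3 := hp.two_le
    omega
  have hgz : (g : ZMod p) ≠ 0 := by
    rw [Ne, ZMod.intCast_zmod_eq_zero_iff_dvd]; exact hgp
  have haz : (a : ZMod p) ≠ 0 := by
    rw [Ne, ZMod.intCast_zmod_eq_zero_iff_dvd]; exact hap
  have hC : 1 ≤ C := by
    have hE1 := hE 1 le_rfl h1T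
    have hpos : 0 < addEnergy p g 1 := by
      unfold _root_.addEnergy
      apply Finset.card_pos.mpr
      exact ⟨(1, 1, 1, 1), by simp⟩
    have h1 : (1 : ℝ) ≤ addEnergy p g 1 := by exact_mod_cast hpos
    simpa using le_trans h1 hE1
  set B := D * Real.exp (-(i : ℝ)) * N with hBdef
  have hB0 : 0 ≤ B := by
    obtain ⟨x, hx⟩ := hLne
    exact le_trans (norm_nonneg _) (hφ x hx)
  set c : (ℕ × ℕ) × ℕ × ℕ → ℤ :=
    fun q => g ^ q.1.1 + g ^ q.2.1 - g ^ q.1.2 - g ^ q.2.2 with hc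
  set Φ : (ℕ × ℕ) × ℕ × ℕ → ℂ :=
    fun q => φ q.1.1 * (starRingEnd ℂ) (φ q.1.2) * (φ q.2.1 * (starRingEnd ℂ) (φ q.2.2)) with hΦ
  set Q : Finset ((ℕ × ℕ) × ℕ × ℕ) := (L ×ˢ L) ×ˢ L ×ˢ L with hQ
  set Qf : Finset ((ℕ × ℕ) × ℕ × ℕ) := Q.filter
    (fun q => (g : ZMod p) ^ q.1.1 + (g : ZMod p) ^ q.2.1
      = (g : ZMod p) ^ q.1.2 + (g : ZMod p) ^ q.2.2) with hQf
  -- Step A : expansion of the fourth power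
  have stepA : ∀ m : ℕ, ‖∑ x ∈ L, φ x * ep p (a * m * g ^ x)‖ ^ 4
      = (∑ q ∈ Q, Φ q * ep p (a * c q * m)).re := by
    intro m
    set S := ∑ x ∈ L, φ x * ep p (a * m * g ^ x) with hS
    have h1 : S * (starRingEnd ℂ) S
        = ∑ z ∈ L ×ˢ L, φ z.1 * (starRingEnd ℂ) (φ z.2)
            * ep p (a * m * (g ^ z.1 - g ^ z.2)) := by
      rw [Finset.sum_product]
      rw [hS, map_sum, Finset.sum_mul_sum]
      refine Finset.sum_congr rfl fun x hx => Finset.sum_congr rfl fun y hy => ?_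
      rw [map_mul, ep_conj,
        show (a * (m : ℤ) * (g ^ x - g ^ y) : ℤ)
          = a * m * g ^ x + -(a * m * g ^ y) from by ring, ep_add]
      ring
    have h2 : (S * (starRingEnd ℂ) S) ^ 2 = ∑ q ∈ Q, Φ q * ep p (a * c q * m) := by
      rw [hQ, Finset.sum_product, sq, h1, Finset.sum_mul_sum]
      refine Finset.sum_congr rfl fun z1 _ => Finset.sum_congr rfl fun z2 _ => ?_
      rw [show (a * c (z1, z2) * (m : ℤ) : ℤ)
          = a * m * (g ^ z1.1 - g ^ z1.2) + a * m * (g ^ z2.1 - g ^ z2.2) from by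
            simp only [hc]; ring, ep_add, hΦ]
      ring
    have h3 : S * (starRingEnd ℂ) S = ((‖S‖ ^ 2 : ℝ) : ℂ) := by
      rw [Complex.mul_conj]
      norm_cast
      rw [Complex.normSq_eq_norm_sq]
    calc ‖S‖ ^ 4 = (((‖S‖ ^ 2 : ℝ) : ℂ) ^ 2).re := by
          rw [← Complex.ofReal_pow, Complex.ofReal_re]; ring
      _ = ((S * (starRingEnd ℂ) S) ^ 2).re := by rw [h3]
      _ = (∑ q ∈ Q, Φ q * ep p (a * c q * m)).re := by rw [h2]
  -- Step B : orthogonality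
  have hcond : ∀ q : (ℕ × ℕ) × ℕ × ℕ, (((a * c q : ℤ)) : ZMod p) = 0
      ↔ (g : ZMod p) ^ q.1.1 + (g : ZMod p) ^ q.2.1
          = (g : ZMod p) ^ q.1.2 + (g : ZMod p) ^ q.2.2 := by
    intro q
    have h1 : ((c q : ℤ) : ZMod p)
        = ((g : ZMod p) ^ q.1.1 + (g : ZMod p) ^ q.2.1)
          - ((g : ZMod p) ^ q.1.2 + (g : ZMod p) ^ q.2.2) := by
      simp only [hc]; push_cast; ring
    rw [Int.cast_mul, mul_eq_zero, h1, sub_eq_zero]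
    simp [haz]
  have stepB : ∑ m ∈ Finset.range p, ‖∑ x ∈ L, φ x * ep p (a * m * g ^ x)‖ ^ 4
      = (∑ q ∈ Qf, Φ q * (p : ℂ)).re := by
    have : ∑ m ∈ Finset.range p, ‖∑ x ∈ L, φ x * ep p (a * m * g ^ x)‖ ^ 4
        = ∑ m ∈ Finset.range p, (∑ q ∈ Q, Φ q * ep p (a * c q * m)).re := by
      exact Finset.sum_congr rfl fun m _ => stepA m
    rw [this, ← Complex.re_sum]
    congr 1
    rw [Finset.sum_comm, hQf, Finset.sum_filter]
    refine Finset.sum_congr rfl fun q _ => ?_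
    rw [← Finset.mul_sum, ep_sum_eq p hp (a * c q)]
    rw [mul_ite, mul_zero]
    by_cases hcq : (g : ZMod p) ^ q.1.1 + (g : ZMod p) ^ q.2.1
        = (g : ZMod p) ^ q.1.2 + (g : ZMod p) ^ q.2.2
    · rw [if_pos ((hcond q).mpr hcq), if_pos hcq]
    · rw [if_neg (fun h => hcq ((hcond q).mp h)), if_neg hcq]
  -- Step C : bound the filtered sum
  have hΦle : ∀ q ∈ Qf, ‖Φ q‖ ≤ B ^ 4 := by
    intro q hq
    rw [hQf, Finset.mem_filter] at hq
    obtain ⟨hqQ, -⟩ := hq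
    rw [hQ] at hqQ
    simp only [Finset.mem_product] at hqQ
    obtain ⟨⟨h1, h3⟩, h2, h4⟩ := hqQ
    have e1 := hφ _ h1
    have e2 := hφ _ h2
    have e3 := hφ _ h3
    have e4 := hφ _ h4
    rw [hΦ]
    simp only [norm_mul, RCLike.norm_conj]
    calc ‖φ q.1.1‖ * ‖φ q.1.2‖ * (‖φ q.2.1‖ * ‖φ q.2.2‖) ≤ B * B * (B * B) := by
          gcongr <;> positivity
      _ = B ^ 4 := by ring
  have stepC : (∑ q ∈ Qf, Φ q * (p : ℂ)).re ≤ (Qf.card : ℝ) * (B ^ 4 * p) := by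
    calc (∑ q ∈ Qf, Φ q * (p : ℂ)).re ≤ ‖∑ q ∈ Qf, Φ q * (p : ℂ)‖ :=
          Complex.re_le_norm _
      _ ≤ ∑ q ∈ Qf, ‖Φ q * (p : ℂ)‖ := norm_sum_le _ _
      _ ≤ ∑ q ∈ Qf, B ^ 4 * p := by
          refine Finset.sum_le_sum fun q hq => ?_
          rw [norm_mul, show ‖(p : ℂ)‖ = (p : ℝ) from by simp]
          exact mul_le_mul_of_nonneg_right (hΦle q hq) (Nat.cast_nonneg p)
      _ = (Qf.card : ℝ) * (B ^ 4 * p) := by rw [Finset.sum_const, nsmul_eq_mul]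
  -- Step D : counting
  have hmemL : ∀ x, x ∈ L ↔ s + 1 ≤ x ∧ x ≤ s + K := by
    intro x
    rw [hLeq, Finset.mem_Icc]
  have hgs : ((g : ZMod p)) ^ s ≠ 0 := pow_ne_zero _ hgz
  have hshift : ∀ x1 x2 y1 y2 : ℕ,
      ((g : ZMod p)) ^ (x1 + s) + (g : ZMod p) ^ (x2 + s)
        = (g : ZMod p) ^ (y1 + s) + (g : ZMod p) ^ (y2 + s)
      ↔ (g : ZMod p) ^ x1 + (g : ZMod p) ^ x2 = (g : ZMod p) ^ y1 + (g : ZMod p) ^ y2 := by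
    intro x1 x2 y1 y2
    simp only [pow_add]
    rw [← add_mul, ← add_mul]
    exact mul_left_inj' hgs
  have hcard : Qf.card = addEnergy p g K := by
    unfold _root_.addEnergy
    apply Finset.card_bij (fun q _ => (q.1.1 - s, (q.2.1 - s, (q.1.2 - s, q.2.2 - s))))
    · rintro ⟨⟨x1, y1⟩, x2, y2⟩ hq
      rw [hQf, Finset.mem_filter, hQ] at hq
      obtain ⟨hqQ, hqc⟩ := hq
      simp only [Finset.mem_product] at hqQ
      obtain ⟨⟨h1, h3⟩, h2, h4⟩ := hqQ
      rw [hmemL] at h1 h2 h3 h4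
      rw [Finset.mem_filter]
      refine ⟨by simp only [Finset.mem_product, Finset.mem_Icc]; omega, ?_⟩
      simp only at hqc ⊢
      rw [← hshift _ _ _ _ ]
      rw [show x1 - s + s = x1 from by omega, show x2 - s + s = x2 from by omega,
        show y1 - s + s = y1 from by omega, show y2 - s + s = y2 from by omega]
      exact hqc
    · rintro ⟨⟨x1, y1⟩, x2, y2⟩ hq ⟨⟨x1', y1'⟩, x2', y2'⟩ hq' heq
      rw [hQf, Finset.mem_filter, hQ] at hq hq'
      simp only [Finset.mem_product] at hq hq'
      obtain ⟨⟨⟨h1, h3⟩, h2, h4⟩, -⟩ := hq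
      obtain ⟨⟨⟨h1', h3'⟩, h2', h4'⟩, -⟩ := hq'
      rw [hmemL] at h1 h2 h3 h4 h1' h2' h3' h4'
      simp only [Prod.mk.injEq] at heq ⊢
      omega
    · rintro ⟨b1, b2, b3, b4⟩ hb
      rw [Finset.mem_filter] at hb
      obtain ⟨hbm, hbc⟩ := hb
      simp only [Finset.mem_product, Finset.mem_Icc] at hbm
      refine ⟨((b1 + s, b3 + s), (b2 + s, b4 + s)), ?_, ?_⟩
      · rw [hQf, Finset.mem_filter, hQ]
        constructor
        · simp only [Finset.mem_product, hmemL]; omega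
        · simp only
          rw [hshift]
          exact hbc
      · simp only [Prod.mk.injEq]
        omega
  -- Step E : numerics
  have hN0 : (0 : ℝ) < N := by exact_mod_cast hN1
  have hT0 : (0 : ℝ) ≤ T := Nat.cast_nonneg T
  have harith : (Real.exp (-(i : ℝ)) * N) ^ 4 * (Real.exp (i : ℝ) * T / N) ^ ((5 : ℝ) / 2)
      = Real.exp (-(3 : ℝ) * i / 2) * (N : ℝ) ^ ((3 : ℝ) / 2) * (T : ℝ) ^ ((5 : ℝ) / 2) :=
    arith_aux (i : ℝ) N T hN0 hT0
  have hEK : (addEnergy p g K : ℝ) ≤ C * (Real.exp (i : ℝ) * T / N) ^ ((5 : ℝ) / 2) := by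
    refine le_trans (hE K hK1 hKT) ?_
    refine mul_le_mul_of_nonneg_left ?_ (by linarith)
    exact Real.rpow_le_rpow (Nat.cast_nonneg K) hLcard (by norm_num)
  calc ∑ m ∈ Finset.range p, ‖∑ x ∈ L, φ x * ep p (a * m * g ^ x)‖ ^ 4
      = (∑ q ∈ Qf, Φ q * (p : ℂ)).re := stepB
    _ ≤ (Qf.card : ℝ) * (B ^ 4 * p) := stepC
    _ = (addEnergy p g K : ℝ) * (B ^ 4 * p) := by rw [hcard]
    _ ≤ (C * (Real.exp (i : ℝ) * T / N) ^ ((5 : ℝ) / 2)) * (B ^ 4 * p) := by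
        refine mul_le_mul_of_nonneg_right hEK (by positivity)
    _ = (C * D ^ 4) * ((p : ℝ) *
          ((Real.exp (-(i : ℝ)) * N) ^ 4 * (Real.exp (i : ℝ) * T / N) ^ ((5 : ℝ) / 2))) := by
        rw [hBdef]; ring
    _ = (C * D ^ 4) * ((p : ℝ) * (Real.exp (-(3 : ℝ) * i / 2) * (N : ℝ) ^ ((3 : ℝ) / 2)
          * (T : ℝ) ^ ((5 : ℝ) / 2))) := by rw [harith]
    _ ≤ (max (C * D ^ 4) 0 + 1) * ((p : ℝ) * (Real.exp (-(3 : ℝ) * i / 2)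
          * (N : ℝ) ^ ((3 : ℝ) / 2) * (T : ℝ) ^ ((5 : ℝ) / 2))) := by
        refine mul_le_mul_of_nonneg_right ?_ (by positivity)
        have := le_max_left (C * D ^ 4) (0 : ℝ); linarith
    _ = (max (C * D ^ 4) 0 + 1) * p * Real.exp (-(3 : ℝ) * i / 2)
          * (N : ℝ) ^ ((3 : ℝ) / 2) * (T : ℝ) ^ ((5 : ℝ) / 2) := by ring
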